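/- arXiv:1603.08129 — 6 statements merged into one kernel-verified Lean document; each statement's English description precedes it below -/
import Mathlib

section
/- Let Π be an n×n stochastic matrix such that Πᴺ has all positive entries for some N. If ν is a probability distribution on {1,…,n} that is both the initial and the time-N marginal of the time-homogeneous Markov chain with transition matrix Π, i.e., (Πᵀ)ᴺ ν = ν, then ν is invariant for Π: Πᵀ ν = ν. -/
/-!
Write distributions as row vectors, so that `Πᵀ ν = ν` reads `ν ᵥ* Π = ν`. The defect
`w = ν ᵥ* Π - ν` is again fixed by `A = Πᴺ` (since `Π` commutes with `Πᴺ`) and has total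
mass `0`. For an entrywise positive `A` with `A *ᵥ 1 = 1`, the positive part `w⁺` of a fixed
vector satisfies `w⁺ ≤ w⁺ ᵥ* A` with equal mass on both sides, so it is fixed as well; and a
nonnegative fixed vector with one zero entry vanishes, because that entry is a positive
combination of all the others. Hence a fixed `w` cannot change sign, and mass `0` forces `w = 0`.
-/

open Matrix

namespace Matrix

variable {ι R : Type*} [Fintype ι]

theorem pow_mulVec_of_mulVec_eq [DecidableEq ι] [Semiring R] {A : Matrix ι ι R} {v : ι → R}
    (h : A *ᵥ v = v) : ∀ k : ℕ, A ^ k *ᵥ v = v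
  | 0 => by rw [pow_zero, one_mulVec]
  | k + 1 => by rw [pow_succ', ← mulVec_mulVec, pow_mulVec_of_mulVec_eq h k, h]

theorem sum_vecMul_of_mulVec_one [CommSemiring R] {A : Matrix ι ι R} (h : A *ᵥ 1 = 1)
    (v : ι → R) : ∑ j, (v ᵥ* A) j = ∑ i, v i := by
  rw [← dotProduct_one, ← dotProduct_mulVec, h, dotProduct_one]

section Ordered

variable [CommRing R] [LinearOrder R] [IsStrictOrderedRing R] {A : Matrix ι ι R}

theorem vecMul_le_vecMul_of_nonneg (hA : ∀ i j, 0 ≤ A i j) {v w : ι → R} (h : v ≤ w) :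
    v ᵥ* A ≤ w ᵥ* A := fun j =>
  Finset.sum_le_sum fun i _ => mul_le_mul_of_nonneg_right (h i) (hA i j)

theorem posPart_le_posPart_vecMul (hA : ∀ i j, 0 ≤ A i j) {w : ι → R} (hw : w ᵥ* A = w) :
    w⁺ ≤ w⁺ ᵥ* A := by
  refine sup_le ?_ ?_
  · calc w = w ᵥ* A := hw.symm
      _ ≤ w⁺ ᵥ* A := vecMul_le_vecMul_of_nonneg hA (le_posPart w)
  · simpa only [zero_vecMul] using vecMul_le_vecMul_of_nonneg hA (posPart_nonneg w)

theorem vecMul_eq_self_of_le_vecMul (h1 : A *ᵥ 1 = 1) {v : ι → R} (h : v ≤ v ᵥ* A) :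
    v ᵥ* A = v := by
  have hmass : ∑ j, v j = ∑ j, (v ᵥ* A) j := (sum_vecMul_of_mulVec_one h1 v).symm
  funext j
  exact ((Finset.sum_eq_sum_iff_of_le fun j _ => h j).1 hmass j (Finset.mem_univ j)).symm

theorem eq_zero_of_vecMul_eq_self_of_apply_eq_zero (hA : ∀ i j, 0 < A i j) {p : ι → R}
    (hp : 0 ≤ p) (hpA : p ᵥ* A = p) {j : ι} (hj : p j = 0) : p = 0 := by
  have hsum : ∑ i, p i * A i j = 0 := (congrFun hpA j).trans hj
  funext i
  have hterm := (Finset.sum_eq_zero_iff_of_nonneg fun i _ => mul_nonneg (hp i) (hA i j).le).1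
    hsum i (Finset.mem_univ i)
  exact (mul_eq_zero.1 hterm).resolve_right (hA i j).ne'

theorem eq_zero_of_vecMul_eq_self_of_sum_eq_zero (hA : ∀ i j, 0 < A i j) (h1 : A *ᵥ 1 = 1)
    {w : ι → R} (hw : w ᵥ* A = w) (hsum : ∑ i, w i = 0) : w = 0 := by
  by_cases hw0 : 0 ≤ w
  · exact (Fintype.sum_eq_zero_iff_of_nonneg hw0).1 hsum
  obtain ⟨j, hj⟩ : ∃ j, w j < 0 := by simpa [Pi.le_def] using hw0
  have hpos : w⁺ ᵥ* A = w⁺ :=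
    vecMul_eq_self_of_le_vecMul h1 (posPart_le_posPart_vecMul (fun i j => (hA i j).le) hw)
  have hposj : w⁺ j = 0 := by rw [Pi.posPart_apply, posPart_eq_zero]; exact hj.le
  have hnonpos : w ≤ 0 := posPart_eq_zero.1
    (eq_zero_of_vecMul_eq_self_of_apply_eq_zero hA (posPart_nonneg w) hpos hposj)
  have hsum_neg : ∑ i, (-w) i = 0 := by simp [hsum]
  exact neg_eq_zero.1 ((Fintype.sum_eq_zero_iff_of_nonneg (neg_nonneg.2 hnonpos)).1 hsum_neg)

end Ordered

end Matrix

theorem fixed_point_of_power_is_invariant_general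
    (n N : ℕ) (P : Matrix (Fin n) (Fin n) ℝ)
    (hProw : ∀ i, ∑ j, P i j = 1)
    (hPN : ∀ i j, 0 < (P ^ N) i j)
    (ν : Fin n → ℝ)
    (hfix : (Pᵀ) ^ N *ᵥ ν = ν) :
    Pᵀ *ᵥ ν = ν := by
  have hrows : P *ᵥ 1 = 1 := funext fun i => by simpa [mulVec, dotProduct] using hProw i
  have hfix' : ν ᵥ* P ^ N = ν := by rwa [← transpose_pow, mulVec_transpose] at hfix
  rw [mulVec_transpose, ← sub_eq_zero]
  refine eq_zero_of_vecMul_eq_self_of_sum_eq_zero hPN (pow_mulVec_of_mulVec_eq hrows N) ?_ ?_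
  · rw [sub_vecMul, vecMul_vecMul, ← pow_mul_comm', ← vecMul_vecMul, hfix']
  · simp only [Pi.sub_apply, Finset.sum_sub_distrib, sum_vecMul_of_mulVec_one hrows, sub_self]

/-- If a probability vector is a fixed point of `(Πᵀ)ᴺ` for a stochastic matrix `Π`
with `Πᴺ` entrywise positive, then it is invariant for `Π`. -/
theorem fixed_point_of_power_is_invariant
    (n N : ℕ) (P : Matrix (Fin n) (Fin n) ℝ)
    (hP0 : ∀ i j, 0 ≤ P i j) (hProw : ∀ i, ∑ j, P i j = 1)
    (hPN : ∀ i j, 0 < (P ^ N) i j)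
    (ν : Fin n → ℝ) (hν0 : ∀ i, 0 ≤ ν i) (hν1 : ∑ i, ν i = 1)
    (hfix : (Pᵀ) ^ N *ᵥ ν = ν) :
    Pᵀ *ᵥ ν = ν :=
  fixed_point_of_power_is_invariant_general n N P hProw hPN ν hfix
end

section
/- Let M be an n×n matrix with all entries positive. Suppose there exist entrywise positive vectors φ(0), φ(1), φ(2) ∈ ℝⁿ with φ(0) = Mφ(1), φ(1) = Mφ(2), and such that diag(φ(0))⁻¹ M diag(φ(1)) = diag(φ(1))⁻¹ M diag(φ(2)). Then there exists λ > 0 with φ(2) = λ⁻¹ φ(1), and φ(1) is a right eigenvector of M with eigenvalue λ; in particular λ equals the spectral radius of M. -/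
/-!
Reading the equality of transition matrices off one row `i` with nonzero entries gives
`φ₁ j / φ₀ i = φ₂ j / φ₁ i` for all `j`, so `φ₂ = c • φ₁` with `c = φ₁ i / φ₀ i`. Then
`φ₁ = M φ₂ = c • M φ₁ = c • φ₀`, so `φ₁` is a positive eigenvector with eigenvalue `c⁻¹`.
A positive eigenvector of a nonnegative matrix belongs to the spectral radius by the
Collatz–Wielandt bound.
-/

open Matrix

/-- Spectral radius of a real square matrix: the largest modulus of a complex
eigenvalue. -/
noncomputable def specRad {n : ℕ} (M : Matrix (Fin n) (Fin n) ℝ) : ℝ :=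
  sSup {r : ℝ | ∃ μ ∈ spectrum ℂ (M.map (algebraMap ℝ ℂ)), r = ‖μ‖}

open Finset

namespace Matrix

variable {ι K : Type*} [Fintype ι] [DecidableEq ι]

theorem inv_diagonal_of_ne_zero [Field K] {d : ι → K} (hd : ∀ i, d i ≠ 0) :
    (diagonal d)⁻¹ = diagonal d⁻¹ := by
  refine inv_eq_right_inv ?_
  rw [diagonal_mul_diagonal, ← diagonal_one]
  exact congrArg diagonal (funext fun i => mul_inv_cancel₀ (hd i))

theorem inv_diagonal_mul_mul_diagonal_apply [Field K] {d : ι → K} (hd : ∀ i, d i ≠ 0)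
    (A : Matrix ι ι K) (e : ι → K) (i j : ι) :
    ((diagonal d)⁻¹ * A * diagonal e) i j = (d i)⁻¹ * A i j * e j := by
  rw [inv_diagonal_of_ne_zero hd, mul_diagonal, diagonal_mul, Pi.inv_apply]

theorem eq_smul_of_inv_diagonal_mul_mul_diagonal_eq [Field K] {A : Matrix ι ι K}
    {a b c : ι → K} (ha : ∀ i, a i ≠ 0) (hb : ∀ i, b i ≠ 0) (i : ι) (hAi : ∀ j, A i j ≠ 0)
    (h : (diagonal a)⁻¹ * A * diagonal b = (diagonal b)⁻¹ * A * diagonal c) :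
    c = (b i / a i) • b := by
  ext j
  have hij := congrFun (congrFun h i) j
  rw [inv_diagonal_mul_mul_diagonal_apply ha, inv_diagonal_mul_mul_diagonal_apply hb] at hij
  rw [Pi.smul_apply, smul_eq_mul]
  field_simp [hAi j, ha i, hb i] at hij ⊢
  linear_combination -hij

theorem mem_spectrum_iff_exists_mulVec_eq_smul [Field K] (A : Matrix ι ι K) (μ : K) :
    μ ∈ spectrum K A ↔ ∃ v ≠ 0, A *ᵥ v = μ • v := by
  rw [spectrum.mem_iff, isUnit_iff_isUnit_det, isUnit_iff_ne_zero, not_ne_iff,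
    ← exists_mulVec_eq_zero_iff]
  refine exists_congr fun v => and_congr_right fun _ => ?_
  rw [sub_mulVec, sub_eq_zero, Algebra.algebraMap_eq_smul_one, smul_mulVec, one_mulVec,
    eq_comm]

/-- Collatz–Wielandt bound: compare `|v|` with `φ` at a coordinate where `|v j| / φ j` is
largest. -/
theorem norm_le_of_mulVec_le_smul {A : Matrix ι ι ℝ} (hA : ∀ i j, 0 ≤ A i j) {φ : ι → ℝ}
    (hφ : ∀ i, 0 < φ i) {r : ℝ} (h : A *ᵥ φ ≤ r • φ) {μ : ℂ}
    (hμ : μ ∈ spectrum ℂ (A.map (algebraMap ℝ ℂ))) : ‖μ‖ ≤ r := by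
  obtain ⟨v, hv, hAv⟩ := (mem_spectrum_iff_exists_mulVec_eq_smul _ μ).1 hμ
  obtain ⟨k, hk⟩ := Function.ne_iff.1 hv
  obtain ⟨i, -, hi⟩ := exists_max_image univ (fun j => ‖v j‖ / φ j) ⟨k, mem_univ k⟩
  set t := ‖v i‖ / φ i with ht
  have hvt : ∀ j, ‖v j‖ ≤ t * φ j := fun j => (div_le_iff₀ (hφ j)).1 (hi j (mem_univ j))
  have hvi : 0 < ‖v i‖ := (div_pos_iff_of_pos_right (hφ i)).1
    ((div_pos (norm_pos_iff.2 hk) (hφ k)).trans_le (hi k (mem_univ k)))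
  refine le_of_mul_le_mul_right ?_ hvi
  calc ‖μ‖ * ‖v i‖ = ‖(A.map (algebraMap ℝ ℂ) *ᵥ v) i‖ := by
        rw [hAv, Pi.smul_apply, smul_eq_mul, norm_mul]
    _ ≤ ∑ j, A i j * ‖v j‖ := (norm_sum_le _ _).trans_eq <| sum_congr rfl fun j _ => by
        simp [abs_of_nonneg (hA i j)]
    _ ≤ ∑ j, A i j * (t * φ j) := sum_le_sum fun j _ => mul_le_mul_of_nonneg_left (hvt j) (hA i j)
    _ = t * (A *ᵥ φ) i := by simp only [mulVec, dotProduct, mul_sum, mul_left_comm]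
    _ ≤ t * (r * φ i) := mul_le_mul_of_nonneg_left (h i) (div_nonneg (norm_nonneg _) (hφ i).le)
    _ = r * ‖v i‖ := by rw [ht]; field_simp [(hφ i).ne']

end Matrix

theorem specRad_eq_of_mulVec_eq_smul {n : ℕ} [NeZero n] {M : Matrix (Fin n) (Fin n) ℝ}
    (hM : ∀ i j, 0 ≤ M i j) {φ : Fin n → ℝ} (hφ : ∀ i, 0 < φ i) {r : ℝ}
    (h : M *ᵥ φ = r • φ) : specRad M = r := by
  have hbound : ∀ μ ∈ spectrum ℂ (M.map (algebraMap ℝ ℂ)), ‖μ‖ ≤ r :=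
    fun μ hμ => norm_le_of_mulVec_le_smul hM hφ h.le hμ
  have hr : (r : ℂ) ∈ spectrum ℂ (M.map (algebraMap ℝ ℂ)) := by
    refine (mem_spectrum_iff_exists_mulVec_eq_smul _ _).2
      ⟨(algebraMap ℝ ℂ) ∘ φ, fun h0 => (hφ 0).ne' (by simpa using congrFun h0 0), ?_⟩
    ext i
    rw [← RingHom.map_mulVec, h]
    simp
  have hr_norm : ‖(r : ℂ)‖ = r := by
    rw [Complex.norm_real, Real.norm_eq_abs, abs_eq_self]
    exact (norm_nonneg _).trans (hbound _ hr)
  exact IsGreatest.csSup_eq ⟨⟨_, hr, hr_norm.symm⟩, by rintro _ ⟨μ, hμ, rfl⟩; exact hbound μ hμ⟩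

theorem equal_transitions_force_perron_eigenvector_general
    (n : ℕ) (hn : 1 ≤ n) (M : Matrix (Fin n) (Fin n) ℝ)
    (hM : ∀ i j, 0 < M i j)
    (φ0 φ1 φ2 : Fin n → ℝ)
    (hφ0 : ∀ i, 0 < φ0 i) (hφ1 : ∀ i, 0 < φ1 i)
    (h0 : φ0 = M *ᵥ φ1) (h1 : φ1 = M *ᵥ φ2)
    (heq : (Matrix.diagonal φ0)⁻¹ * M * Matrix.diagonal φ1 =
      (Matrix.diagonal φ1)⁻¹ * M * Matrix.diagonal φ2) :
    ∃ lam : ℝ, 0 < lam ∧ φ2 = lam⁻¹ • φ1 ∧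
      M *ᵥ φ1 = lam • φ1 ∧ lam = specRad M := by
  have : NeZero n := ⟨by omega⟩
  set c := φ1 0 / φ0 0
  have hc : 0 < c := div_pos (hφ1 0) (hφ0 0)
  have hφ2 : φ2 = c • φ1 := eq_smul_of_inv_diagonal_mul_mul_diagonal_eq
    (fun i => (hφ0 i).ne') (fun i => (hφ1 i).ne') 0 (fun j => (hM 0 j).ne') heq
  have hφ1c : φ1 = c • φ0 := by rw [h1, hφ2, mulVec_smul, ← h0]
  have heig : M *ᵥ φ1 = c⁻¹ • φ1 := by rw [← h0, hφ1c, inv_smul_smul₀ hc.ne']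
  exact ⟨c⁻¹, inv_pos.2 hc, by rw [inv_inv, hφ2], heig,
    (specRad_eq_of_mulVec_eq_smul (fun i j => (hM i j).le) hφ1 heig).symm⟩

/-- If a positive matrix `M` and positive vectors `φ(0) = Mφ(1)`, `φ(1) = Mφ(2)`
give rise to the same one-step transition matrix on two consecutive steps, then
`φ(2)` is proportional to `φ(1)`, which is a positive eigenvector of `M`, with
eigenvalue the spectral radius of `M`. -/
theorem equal_transitions_force_perron_eigenvector
    (n : ℕ) (hn : 1 ≤ n) (M : Matrix (Fin n) (Fin n) ℝ)
    (hM : ∀ i j, 0 < M i j)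
    (φ0 φ1 φ2 : Fin n → ℝ)
    (hφ0 : ∀ i, 0 < φ0 i) (hφ1 : ∀ i, 0 < φ1 i) (hφ2 : ∀ i, 0 < φ2 i)
    (h0 : φ0 = M *ᵥ φ1) (h1 : φ1 = M *ᵥ φ2)
    (heq : (Matrix.diagonal φ0)⁻¹ * M * Matrix.diagonal φ1 =
      (Matrix.diagonal φ1)⁻¹ * M * Matrix.diagonal φ2) :
    ∃ lam : ℝ, 0 < lam ∧ φ2 = lam⁻¹ • φ1 ∧
      M *ᵥ φ1 = lam • φ1 ∧ lam = specRad M :=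
  equal_transitions_force_perron_eigenvector_general n hn M hM φ0 φ1 φ2 hφ0 hφ1 h0 h1 heq
end

section
/- Let M be a nonnegative n×n matrix with Mᴺ entrywise positive, and suppose φ, φ̂ : {0,…,N}×{1,…,n} → ℝ≥0 solve the Schrödinger system φ(t) = Mφ(t+1), φ̂(t+1) = Mᵀφ̂(t) with boundary conditions φ(0,x)φ̂(0,x) = ν₀(x) and φ(N,x)φ̂(N,x) = ν_N(x), where ν₀, ν_N are probability vectors and all φ(t,x) > 0. Then the path measure P*(x₀,…,x_N) := ν₀(x₀) ∏_{t=0}^{N−1} m_{x_t x_{t+1}} φ(t+1, x_{t+1})/φ(t, x_t) is a probability measure on {1,…,n}^{N+1} whose time-0 marginal is ν₀ and whose time-N marginal is ν_N. -/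
/-!
Because `ν₀ = φ(0) φ̂(0)`, the ratios of `φ` telescope and the bridge weight of a path `x` is
`φ̂(0, x₀) · ∏ₜ m_{xₜ xₜ₊₁} · φ(N, x_N)`. Summing such weights over paths gives a bilinear form in
`Mᴺ`, and the Schrödinger system says `φ(0) = Mᴺ φ(N)` and `φ̂(N) = (Mᴺ)ᵀ φ̂(0)`. Hence the time-0
marginal is `φ̂(0) ⊙ Mᴺ φ(N) = φ̂(0) ⊙ φ(0) = ν₀`, the time-`N` marginal is
`(Mᴺ)ᵀ φ̂(0) ⊙ φ(N) = φ̂(N) ⊙ φ(N) = ν_N`, and the total mass is `∑ ν₀ = 1`.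
-/

open Matrix Finset

theorem Fin.prod_univ_succ_div_castSucc {G : Type*} [CommGroupWithZero G] :
    ∀ {K : ℕ} (f : Fin (K + 1) → G), (∀ t, f t ≠ 0) →
      ∏ t : Fin K, f t.succ / f t.castSucc = f (Fin.last K) / f 0
  | 0, f, hf => by simp [hf 0]
  | K + 1, f, hf => by
    rw [Fin.prod_univ_castSucc]
    simp only [Fin.succ_castSucc, Fin.succ_last]
    rw [Fin.prod_univ_succ_div_castSucc (fun t => f t.castSucc) (fun t => hf _),
      Fin.castSucc_zero, mul_comm, div_mul_div_cancel₀ (hf _)]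

section Paths

variable {ι R : Type*} [Fintype ι] [DecidableEq ι] [CommSemiring R]

theorem Matrix.sum_paths_mul_prod_mul (A : Matrix ι ι R) (a : ι → R) :
    ∀ (K : ℕ) (b : ι → R),
      ∑ x : Fin (K + 1) → ι, a (x 0) * (∏ t : Fin K, A (x t.castSucc) (x t.succ)) *
        b (x (Fin.last K)) = a ⬝ᵥ (A ^ K *ᵥ b)
  | 0, b => by
    rw [← (Equiv.funUnique (Fin 1) ι).symm.sum_comp]
    simp [dotProduct]
  | K + 1, b => by
    rw [← (Fin.snocEquiv fun _ => ι).sum_comp, Fintype.sum_prod_type, Finset.sum_comm]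
    simp only [Fin.snocEquiv_apply, Fin.prod_univ_castSucc, ← Fin.castSucc_zero, Fin.snoc_castSucc,
      Fin.succ_castSucc, Fin.succ_last, Fin.snoc_last]
    have step : ∀ y : Fin (K + 1) → ι, ∑ z, a (y 0) *
        ((∏ t : Fin K, A (y t.castSucc) (y t.succ)) * A (y (Fin.last K)) z) * b z =
          a (y 0) * (∏ t : Fin K, A (y t.castSucc) (y t.succ)) * (A *ᵥ b) (y (Fin.last K)) := by
      intro y
      simp only [mulVec, dotProduct, mul_sum, mul_assoc]
    simp only [step, Matrix.sum_paths_mul_prod_mul A a K, pow_succ, mulVec_mulVec]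

theorem Matrix.sum_paths_start_eq (A : Matrix ι ι R) (K : ℕ) (a b : ι → R) (i : ι) :
    ∑ x : Fin (K + 1) → ι, (if x 0 = i then
      a (x 0) * (∏ t : Fin K, A (x t.castSucc) (x t.succ)) * b (x (Fin.last K)) else 0) =
        a i * (A ^ K *ᵥ b) i := by
  have single : ∀ x : Fin (K + 1) → ι, (if x 0 = i then
      a (x 0) * (∏ t : Fin K, A (x t.castSucc) (x t.succ)) * b (x (Fin.last K)) else 0) =
        (Pi.single i (a i) : ι → R) (x 0) * (∏ t : Fin K, A (x t.castSucc) (x t.succ)) *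
          b (x (Fin.last K)) := by
    intro x
    split_ifs with h <;> simp [h]
  simp only [single, sum_paths_mul_prod_mul, single_dotProduct]

theorem Matrix.sum_paths_end_eq (A : Matrix ι ι R) (K : ℕ) (a b : ι → R) (j : ι) :
    ∑ x : Fin (K + 1) → ι, (if x (Fin.last K) = j then
      a (x 0) * (∏ t : Fin K, A (x t.castSucc) (x t.succ)) * b (x (Fin.last K)) else 0) =
        (a ᵥ* A ^ K) j * b j := by
  have single : ∀ x : Fin (K + 1) → ι, (if x (Fin.last K) = j then
      a (x 0) * (∏ t : Fin K, A (x t.castSucc) (x t.succ)) * b (x (Fin.last K)) else 0) =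
        a (x 0) * (∏ t : Fin K, A (x t.castSucc) (x t.succ)) *
          (Pi.single j (b j) : ι → R) (x (Fin.last K)) := by
    intro x
    split_ifs with h <;> simp [h]
  simp only [single, sum_paths_mul_prod_mul, dotProduct_mulVec, dotProduct_single]

theorem Matrix.eq_pow_mulVec_of_castSucc_eq_mulVec_succ (A : Matrix ι ι R) :
    ∀ {K : ℕ} (v : Fin (K + 1) → ι → R), (∀ t : Fin K, v t.castSucc = A *ᵥ v t.succ) →
      v 0 = A ^ K *ᵥ v (Fin.last K)
  | 0, v, _ => by simp
  | K + 1, v, h => by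
    rw [← Fin.castSucc_zero, eq_pow_mulVec_of_castSucc_eq_mulVec_succ A (fun t => v t.castSucc)
      (fun t => by simpa only [Fin.succ_castSucc] using h t.castSucc), h, Fin.succ_last,
      mulVec_mulVec, pow_succ]

theorem Matrix.eq_vecMul_pow_of_succ_eq_vecMul_castSucc (A : Matrix ι ι R) :
    ∀ {K : ℕ} (v : Fin (K + 1) → ι → R), (∀ t : Fin K, v t.succ = v t.castSucc ᵥ* A) →
      v (Fin.last K) = v 0 ᵥ* A ^ K
  | 0, v, _ => by simp
  | K + 1, v, h => by
    rw [← Fin.succ_last, h, eq_vecMul_pow_of_succ_eq_vecMul_castSucc A (fun t => v t.castSucc)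
      (fun t => by simpa only [Fin.succ_castSucc] using h t.castSucc), Fin.castSucc_zero,
      vecMul_vecMul, pow_succ]

end Paths

theorem prod_mul_div_eq_prod_mul_last_div_zero {K : ℕ} {F ι : Type*} [Field F]
    (m : ι → ι → F) (f : Fin (K + 1) → ι → F) (hf : ∀ t x, f t x ≠ 0) (x : Fin (K + 1) → ι) :
    ∏ t : Fin K, (m (x t.castSucc) (x t.succ) * f t.succ (x t.succ) / f t.castSucc (x t.castSucc)) =
      (∏ t : Fin K, m (x t.castSucc) (x t.succ)) * f (Fin.last K) (x (Fin.last K)) / f 0 (x 0) := by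
  simp only [mul_div_assoc, prod_mul_distrib]
  rw [Fin.prod_univ_succ_div_castSucc (fun t => f t (x t)) (fun t => hf t _)]

theorem schroedinger_bridge_is_probability_with_marginals_general
    (n N : ℕ)
    (M : Matrix (Fin n) (Fin n) ℝ) (hM : ∀ i j, 0 ≤ M i j)
    (ν0 νN : Fin n → ℝ)
    (hν00 : ∀ i, 0 ≤ ν0 i) (hν01 : ∑ i, ν0 i = 1)
    (φ φh : Fin (N + 1) → Fin n → ℝ)
    (hφpos : ∀ t x, 0 < φ t x)
    (hrec : ∀ t : Fin N, ∀ i, φ t.castSucc i = ∑ j, M i j * φ t.succ j)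
    (hrech : ∀ t : Fin N, ∀ j, φh t.succ j = ∑ i, M i j * φh t.castSucc i)
    (hbc0 : ∀ x, φ 0 x * φh 0 x = ν0 x)
    (hbcN : ∀ x, φ (Fin.last N) x * φh (Fin.last N) x = νN x) :
    (∀ x : Fin (N + 1) → Fin n,
        0 ≤ ν0 (x 0) * ∏ t : Fin N,
          (M (x t.castSucc) (x t.succ) * φ t.succ (x t.succ) / φ t.castSucc (x t.castSucc))) ∧
      (∑ x : Fin (N + 1) → Fin n,
        ν0 (x 0) * ∏ t : Fin N,
          (M (x t.castSucc) (x t.succ) * φ t.succ (x t.succ) / φ t.castSucc (x t.castSucc))) = 1 ∧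
      (∀ i, (∑ x : Fin (N + 1) → Fin n,
        if x 0 = i then
          ν0 (x 0) * ∏ t : Fin N,
            (M (x t.castSucc) (x t.succ) * φ t.succ (x t.succ) / φ t.castSucc (x t.castSucc))
        else 0) = ν0 i) ∧
      (∀ j, (∑ x : Fin (N + 1) → Fin n,
        if x (Fin.last N) = j then
          ν0 (x 0) * ∏ t : Fin N,
            (M (x t.castSucc) (x t.succ) * φ t.succ (x t.succ) / φ t.castSucc (x t.castSucc))
        else 0) = νN j) := by
  have hφ : ∀ t x, φ t x ≠ 0 := fun t x => (hφpos t x).ne'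
  have weight (x : Fin (N + 1) → Fin n) :
      ν0 (x 0) * ∏ t : Fin N,
        (M (x t.castSucc) (x t.succ) * φ t.succ (x t.succ) / φ t.castSucc (x t.castSucc)) =
      φh 0 (x 0) * (∏ t : Fin N, M (x t.castSucc) (x t.succ)) * φ (Fin.last N) (x (Fin.last N)) := by
    rw [prod_mul_div_eq_prod_mul_last_div_zero M φ hφ x, ← hbc0]
    field_simp [hφ 0 (x 0)]
  have hφ0 : φ 0 = M ^ N *ᵥ φ (Fin.last N) :=
    eq_pow_mulVec_of_castSucc_eq_mulVec_succ M φ fun t => funext (hrec t)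
  have hφhN : φh (Fin.last N) = φh 0 ᵥ* M ^ N :=
    eq_vecMul_pow_of_succ_eq_vecMul_castSucc M φh fun t => funext fun j => by
      simp only [hrech, vecMul, dotProduct, mul_comm]
  refine ⟨fun x => ?_, ?_, fun i => ?_, fun j => ?_⟩
  · exact mul_nonneg (hν00 _) (prod_nonneg fun t _ =>
      div_nonneg (mul_nonneg (hM _ _) (hφpos _ _).le) (hφpos _ _).le)
  · rw [← hν01, sum_congr rfl fun x _ => weight x, sum_paths_mul_prod_mul, ← hφ0, dotProduct_comm]
    simp only [dotProduct, hbc0]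
  · simp only [weight, sum_paths_start_eq, ← hφ0, mul_comm (φh 0 i), hbc0]
  · simp only [weight, sum_paths_end_eq, ← hφhN, mul_comm _ (φ (Fin.last N) j), hbcN]

/-- The Schrödinger bridge constructed from a solution of the Schrödinger system is a
probability measure on paths with the prescribed endpoint marginals. -/
theorem schroedinger_bridge_is_probability_with_marginals
    (n N : ℕ) (hn : 1 ≤ n) (hN : 1 ≤ N)
    (M : Matrix (Fin n) (Fin n) ℝ) (hM : ∀ i j, 0 ≤ M i j)
    (hMN : ∀ i j, 0 < (M ^ N) i j)
    (ν0 νN : Fin n → ℝ)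
    (hν00 : ∀ i, 0 ≤ ν0 i) (hν01 : ∑ i, ν0 i = 1)
    (hνN0 : ∀ j, 0 ≤ νN j) (hνN1 : ∑ j, νN j = 1)
    (φ φh : Fin (N + 1) → Fin n → ℝ)
    (hφpos : ∀ t x, 0 < φ t x) (hφh0 : ∀ t x, 0 ≤ φh t x)
    (hrec : ∀ t : Fin N, ∀ i, φ t.castSucc i = ∑ j, M i j * φ t.succ j)
    (hrech : ∀ t : Fin N, ∀ j, φh t.succ j = ∑ i, M i j * φh t.castSucc i)
    (hbc0 : ∀ x, φ 0 x * φh 0 x = ν0 x)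
    (hbcN : ∀ x, φ (Fin.last N) x * φh (Fin.last N) x = νN x) :
    (∀ x : Fin (N + 1) → Fin n,
        0 ≤ ν0 (x 0) * ∏ t : Fin N,
          (M (x t.castSucc) (x t.succ) * φ t.succ (x t.succ) / φ t.castSucc (x t.castSucc))) ∧
      (∑ x : Fin (N + 1) → Fin n,
        ν0 (x 0) * ∏ t : Fin N,
          (M (x t.castSucc) (x t.succ) * φ t.succ (x t.succ) / φ t.castSucc (x t.castSucc))) = 1 ∧
      (∀ i, (∑ x : Fin (N + 1) → Fin n,
        if x 0 = i then
          ν0 (x 0) * ∏ t : Fin N,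
            (M (x t.castSucc) (x t.succ) * φ t.succ (x t.succ) / φ t.castSucc (x t.castSucc))
        else 0) = ν0 i) ∧
      (∀ j, (∑ x : Fin (N + 1) → Fin n,
        if x (Fin.last N) = j then
          ν0 (x 0) * ∏ t : Fin N,
            (M (x t.castSucc) (x t.succ) * φ t.succ (x t.succ) / φ t.castSucc (x t.castSucc))
        else 0) = νN j) :=
  schroedinger_bridge_is_probability_with_marginals_general n N M hM ν0 νN hν00 hν01 φ φh hφpos hrec
    hrech hbc0 hbcN
end

section
/- In the setting of the previous Schrödinger system, the minimizing path measure P* over 𝒫(ν₀,ν_N) of D(P‖𝔐), where 𝔐(x₀,…,x_N) = μ₀(x₀)∏ m_{x_t x_{t+1}}, satisfies: for any Q ∈ 𝒫(ν₀,ν_N) with Supp(Q) ⊆ Supp(𝔐), D(Q‖𝔐) = D(Q‖P*) + D(P*‖𝔐). Consequently P* is the unique minimizer. -/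
/-!
Telescoping the potentials gives `P* x = (ν₀ / φ(0))(x₀) · ∏ₜ m(xₜ, xₜ₊₁) · φ(N)(x_N)`, so
`log (P* / 𝔐)` is a function of `x₀` plus a function of `x_N`, and its mean is the same under
every path measure with the endpoint marginals of `P*`. Those are `ν₀` and `ν_N`, because the
Schrödinger system iterates to `φ(0) = Mᴺ φ(N)` and `φ̂(N) = φ̂(0) Mᴺ`. Splitting
`log (Q / 𝔐) = log (Q / P*) + log (P* / 𝔐)` then gives the identity, and Gibbs' inequality
(`x log x + 1 - x ≥ 0`, with equality only at `1`) gives `D(Q‖P*) ≥ 0`, with equality only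
for `Q = P*`.
-/

open Matrix Finset

/-- Relative entropy on a finite type (against a not-necessarily-probability
nonnegative measure), convention `0 log 0 = 0`. -/
noncomputable def relEnt {X : Type*} [Fintype X] (P Q : X → ℝ) : ℝ :=
  ∑ x, P x * Real.log (P x / Q x)

/-- The Markovian path measure induced by an initial distribution `μ0` and a
transition mechanism `M` on paths of length `N`. -/
noncomputable def pathMeasure (n N : ℕ) (μ0 : Fin n → ℝ)
    (M : Matrix (Fin n) (Fin n) ℝ) : (Fin (N + 1) → Fin n) → ℝ :=
  fun x => μ0 (x 0) * ∏ t : Fin N, M (x t.castSucc) (x t.succ)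

/-- The Schrödinger bridge path measure with initial marginal `ν0` and transitions
`π_{ij}(t) = m_{ij} φ(t+1,j)/φ(t,i)`. -/
noncomputable def bridgeMeasure (n N : ℕ) (ν0 : Fin n → ℝ)
    (M : Matrix (Fin n) (Fin n) ℝ) (φ : Fin (N + 1) → Fin n → ℝ) :
    (Fin (N + 1) → Fin n) → ℝ :=
  fun x => ν0 (x 0) * ∏ t : Fin N,
    (M (x t.castSucc) (x t.succ) * φ t.succ (x t.succ) / φ t.castSucc (x t.castSucc))

open InformationTheory Real

section RelativeEntropy

variable {X : Type*} [Fintype X] {P Q m : X → ℝ}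

theorem relEnt_eq_relEnt_add_sum_mul_log (h : ∀ x, Q x ≠ 0 → P x ≠ 0 ∧ m x ≠ 0) :
    relEnt Q m = relEnt Q P + ∑ x, Q x * log (P x / m x) := by
  rw [relEnt, relEnt, ← sum_add_distrib]
  refine sum_congr rfl fun x _ => ?_
  by_cases hQ : Q x = 0
  · simp [hQ]
  obtain ⟨hP, hm⟩ := h x hQ
  rw [← mul_add, ← log_mul (div_ne_zero hQ hP) (div_ne_zero hP hm), div_mul_div_cancel₀ hP]

theorem relEnt_eq_sum_mul_klFun_add (h : ∀ x, Q x ≠ 0 → P x ≠ 0) :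
    relEnt Q P = ∑ x, P x * klFun (Q x / P x) + ∑ x, (Q x - P x) := by
  rw [relEnt, ← sum_add_distrib]
  refine sum_congr rfl fun x _ => ?_
  by_cases hQ : Q x = 0
  · rcases eq_or_ne (P x) 0 with hP | hP <;> simp [hQ, hP, klFun]
  have hP := h x hQ
  rw [klFun]
  field_simp
  ring

theorem relEnt_eq_sum_mul_klFun (hsum : ∑ x, Q x = ∑ x, P x) (h : ∀ x, Q x ≠ 0 → P x ≠ 0) :
    relEnt Q P = ∑ x, P x * klFun (Q x / P x) := by
  rw [relEnt_eq_sum_mul_klFun_add h, sum_sub_distrib, hsum, sub_self, add_zero]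

theorem relEnt_nonneg (hQ : ∀ x, 0 ≤ Q x) (hP : ∀ x, 0 ≤ P x) (hsum : ∑ x, Q x = ∑ x, P x)
    (h : ∀ x, Q x ≠ 0 → P x ≠ 0) : 0 ≤ relEnt Q P := by
  rw [relEnt_eq_sum_mul_klFun hsum h]
  exact sum_nonneg fun x _ => mul_nonneg (hP x) (klFun_nonneg (div_nonneg (hQ x) (hP x)))

theorem eq_of_relEnt_eq_zero (hQ : ∀ x, 0 ≤ Q x) (hP : ∀ x, 0 ≤ P x)
    (hsum : ∑ x, Q x = ∑ x, P x) (h : ∀ x, Q x ≠ 0 → P x ≠ 0) (h0 : relEnt Q P = 0) :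
    Q = P := by
  rw [relEnt_eq_sum_mul_klFun hsum h, sum_eq_zero_iff_of_nonneg fun x _ =>
    mul_nonneg (hP x) (klFun_nonneg (div_nonneg (hQ x) (hP x)))] at h0
  funext x
  rcases mul_eq_zero.mp (h0 x (mem_univ x)) with hPx | hkl
  · rw [hPx]
    exact not_imp_not.mp (h x) hPx
  · rw [klFun_eq_zero_iff (div_nonneg (hQ x) (hP x))] at hkl
    exact (div_eq_one_iff_eq fun hPx => by simp [hPx] at hkl).mp hkl

end RelativeEntropy

section Marginal

variable {X I : Type*} [Fintype X] [DecidableEq I] {R : X → ℝ} {c : X → I} {ρ : I → ℝ}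

theorem sum_mul_comp_eq_of_marginal [Fintype I]
    (hR : ∀ i, (∑ x, if c x = i then R x else 0) = ρ i) (h : I → ℝ) :
    ∑ x, R x * h (c x) = ∑ i, ρ i * h i := by
  simp_rw [← hR, sum_mul, ite_mul, zero_mul]
  rw [sum_comm]
  simp

theorem marginal_ne_zero (hR0 : ∀ x, 0 ≤ R x)
    (hR : ∀ i, (∑ x, if c x = i then R x else 0) = ρ i) {x : X} (hx : R x ≠ 0) :
    ρ (c x) ≠ 0 := by
  have hle : R x ≤ ρ (c x) := by
    rw [← hR]
    calc R x = if c x = c x then R x else 0 := (if_pos rfl).symm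
      _ ≤ _ := single_le_sum (f := fun y => if c y = c x then R y else 0)
          (fun y _ => by split_ifs <;> simp [hR0 y]) (mem_univ x)
  exact ((hR0 x).lt_of_ne' hx |>.trans_le hle).ne'

end Marginal

theorem Fin.prod_succ_div_castSucc {K : Type*} [Semifield K] {N : ℕ} {f : Fin (N + 1) → K}
    (hf : ∀ t, f t ≠ 0) : ∏ t : Fin N, f t.succ / f t.castSucc = f (Fin.last N) / f 0 := by
  induction N with
  | zero => simp [div_self (hf 0)]
  | succ N ih =>
    rw [Fin.prod_univ_castSucc]
    simp only [Fin.succ_castSucc]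
    rw [ih fun t => hf _, Fin.succ_last, Fin.castSucc_zero, div_mul_div_cancel₀' (hf _)]

section Paths

variable {ι R : Type*} [CommSemiring R] {N : ℕ} {M : Matrix ι ι R}

def pathWeight (M : Matrix ι ι R) (x : Fin (N + 1) → ι) : R :=
  ∏ t : Fin N, M (x t.castSucc) (x t.succ)

def tiltedPathMeasure (M : Matrix ι ι R) (F G : ι → R) (x : Fin (N + 1) → ι) : R :=
  F (x 0) * pathWeight M x * G (x (Fin.last N))

theorem pathWeight_cons (M : Matrix ι ι R) (i : ι) (y : Fin (N + 1) → ι) :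
    pathWeight M (Fin.cons i y : Fin (N + 2) → ι) = M i (y 0) * pathWeight M y := by
  simp only [pathWeight, Fin.prod_univ_succ, Fin.castSucc_zero, Fin.cons_zero, Fin.cons_succ,
    ← Fin.succ_castSucc]

variable [Fintype ι] [DecidableEq ι]

theorem sum_tiltedPathMeasure (M : Matrix ι ι R) (F G : ι → R) :
    ∑ x : Fin (N + 1) → ι, tiltedPathMeasure M F G x = F ⬝ᵥ (M ^ N *ᵥ G) := by
  induction N generalizing F with
  | zero =>
    rw [← (Equiv.funUnique (Fin 1) ι).symm.sum_comp]
    simp [tiltedPathMeasure, pathWeight, dotProduct]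
  | succ N ih =>
    rw [← (Fin.consEquiv fun _ => ι).sum_comp, Fintype.sum_prod_type, pow_succ',
      ← mulVec_mulVec, dotProduct]
    refine sum_congr rfl fun i _ => ?_
    rw [show F i * (M *ᵥ (M ^ N *ᵥ G)) i = (fun j => F i * M i j) ⬝ᵥ (M ^ N *ᵥ G) by
      simp only [mulVec, dotProduct, mul_sum, mul_assoc], ← ih]
    refine sum_congr rfl fun y _ => ?_
    change tiltedPathMeasure M F G (Fin.cons i y : Fin (N + 2) → ι) = _
    rw [tiltedPathMeasure, tiltedPathMeasure, Fin.cons_zero, pathWeight_cons, ← Fin.succ_last,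
      Fin.cons_succ]
    ring

theorem sum_ite_zero_tiltedPathMeasure (F G : ι → R) (i : ι) :
    (∑ x : Fin (N + 1) → ι, if x 0 = i then tiltedPathMeasure M F G x else 0) =
      F i * (M ^ N *ᵥ G) i := by
  rw [← single_dotProduct, ← sum_tiltedPathMeasure]
  refine sum_congr rfl fun x _ => ?_
  by_cases hx : x 0 = i <;> simp [tiltedPathMeasure, hx]

theorem sum_ite_last_tiltedPathMeasure (F G : ι → R) (j : ι) :
    (∑ x : Fin (N + 1) → ι, if x (Fin.last N) = j then tiltedPathMeasure M F G x else 0) =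
      (F ᵥ* M ^ N) j * G j := by
  rw [← dotProduct_single, ← dotProduct_mulVec, ← sum_tiltedPathMeasure]
  refine sum_congr rfl fun x _ => ?_
  by_cases hx : x (Fin.last N) = j <;> simp [tiltedPathMeasure, hx]

theorem eq_pow_mulVec_of_eq_mulVec_succ {v : Fin (N + 1) → ι → R}
    (hv : ∀ t : Fin N, v t.castSucc = M *ᵥ v t.succ) : v 0 = M ^ N *ᵥ v (Fin.last N) := by
  induction N with
  | zero => simp
  | succ N ih =>
    rw [← Fin.castSucc_zero, hv, ih (v := fun t => v t.succ) fun t => hv t.succ, pow_succ',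
      mulVec_mulVec, Fin.succ_last]

theorem eq_vecMul_pow_of_eq_vecMul_castSucc {w : Fin (N + 1) → ι → R}
    (hw : ∀ t : Fin N, w t.succ = w t.castSucc ᵥ* M) : w (Fin.last N) = w 0 ᵥ* M ^ N := by
  induction N with
  | zero => simp
  | succ N ih =>
    rw [← Fin.succ_last, hw, ← Fin.castSucc_zero,
      ih (w := fun t => w t.castSucc) fun t => by simpa using hw t.castSucc, pow_succ,
      ← vecMul_vecMul]

end Paths

section LogLikelihood

variable {ι : Type*} {N : ℕ} {M : Matrix ι ι ℝ} {F G F' G' : ι → ℝ}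

theorem log_tiltedPathMeasure_div {x : Fin (N + 1) → ι} (h : tiltedPathMeasure M F G x ≠ 0)
    (h' : tiltedPathMeasure M F' G' x ≠ 0) :
    log (tiltedPathMeasure M F G x / tiltedPathMeasure M F' G' x) =
      log (F (x 0) / F' (x 0)) + log (G (x (Fin.last N)) / G' (x (Fin.last N))) := by
  simp only [tiltedPathMeasure, ne_eq, mul_eq_zero, not_or] at h h' ⊢
  rw [← log_mul (div_ne_zero h.1.1 h'.1.1) (div_ne_zero h.2 h'.2)]
  congr 1
  field_simp [h.1.2]

variable [Fintype ι] [DecidableEq ι]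

theorem sum_mul_log_tiltedPathMeasure_div {R : (Fin (N + 1) → ι) → ℝ} {ρ₀ ρ₁ : ι → ℝ}
    (hR₀ : ∀ i, (∑ x, if x 0 = i then R x else 0) = ρ₀ i)
    (hR₁ : ∀ j, (∑ x, if x (Fin.last N) = j then R x else 0) = ρ₁ j)
    (hsupp : ∀ x, R x ≠ 0 → tiltedPathMeasure M F G x ≠ 0 ∧ tiltedPathMeasure M F' G' x ≠ 0) :
    ∑ x, R x * log (tiltedPathMeasure M F G x / tiltedPathMeasure M F' G' x) =
      ∑ i, ρ₀ i * log (F i / F' i) + ∑ j, ρ₁ j * log (G j / G' j) := by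
  have hsplit : ∀ x, R x * log (tiltedPathMeasure M F G x / tiltedPathMeasure M F' G' x) =
      R x * log (F (x 0) / F' (x 0)) + R x * log (G (x (Fin.last N)) / G' (x (Fin.last N))) := by
    intro x
    by_cases hx : R x = 0
    · simp [hx]
    rw [log_tiltedPathMeasure_div (hsupp x hx).1 (hsupp x hx).2, mul_add]
  rw [sum_congr rfl fun x _ => hsplit x, sum_add_distrib,
    sum_mul_comp_eq_of_marginal hR₀ fun i => log (F i / F' i),
    sum_mul_comp_eq_of_marginal hR₁ fun j => log (G j / G' j)]

end LogLikelihood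

section Bridge

variable {n N : ℕ} {M : Matrix (Fin n) (Fin n) ℝ} {ν0 : Fin n → ℝ} {φ : Fin (N + 1) → Fin n → ℝ}

theorem pathMeasure_eq_tiltedPathMeasure (μ0 : Fin n → ℝ) :
    pathMeasure n N μ0 M = tiltedPathMeasure M μ0 1 := by
  funext x
  simp [pathMeasure, tiltedPathMeasure, pathWeight]

theorem bridgeMeasure_eq_tiltedPathMeasure (hφ : ∀ t i, φ t i ≠ 0) :
    bridgeMeasure n N ν0 M φ = tiltedPathMeasure M (fun i => ν0 i / φ 0 i) (φ (Fin.last N)) := by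
  funext x
  simp only [bridgeMeasure, tiltedPathMeasure, pathWeight, mul_div_assoc, prod_mul_distrib,
    Fin.prod_succ_div_castSucc (f := fun t => φ t (x t)) fun t => hφ t (x t)]
  ring

theorem bridgeMeasure_marginal_zero (hφ : ∀ t i, φ t i ≠ 0)
    (hrec : ∀ t : Fin N, ∀ i, φ t.castSucc i = ∑ j, M i j * φ t.succ j) (i : Fin n) :
    (∑ x, if x 0 = i then bridgeMeasure n N ν0 M φ x else 0) = ν0 i := by
  rw [bridgeMeasure_eq_tiltedPathMeasure hφ, sum_ite_zero_tiltedPathMeasure,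
    ← eq_pow_mulVec_of_eq_mulVec_succ fun t => funext (hrec t), div_mul_cancel₀ _ (hφ 0 i)]

theorem bridgeMeasure_marginal_last {νN : Fin n → ℝ} {φh : Fin (N + 1) → Fin n → ℝ}
    (hφ : ∀ t i, φ t i ≠ 0)
    (hrech : ∀ t : Fin N, ∀ j, φh t.succ j = ∑ i, M i j * φh t.castSucc i)
    (hbc0 : ∀ x, φ 0 x * φh 0 x = ν0 x)
    (hbcN : ∀ x, φ (Fin.last N) x * φh (Fin.last N) x = νN x) (j : Fin n) :
    (∑ x, if x (Fin.last N) = j then bridgeMeasure n N ν0 M φ x else 0) = νN j := by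
  have hφh0 : (fun i => ν0 i / φ 0 i) = φh 0 :=
    funext fun i => by rw [← hbc0, mul_div_cancel_left₀ _ (hφ 0 i)]
  have hφhN : φh (Fin.last N) = φh 0 ᵥ* M ^ N :=
    eq_vecMul_pow_of_eq_vecMul_castSucc fun t => funext fun j => by
      simp only [hrech, vecMul, dotProduct, mul_comm]
  rw [bridgeMeasure_eq_tiltedPathMeasure hφ, sum_ite_last_tiltedPathMeasure, hφh0, ← hφhN,
    mul_comm, hbcN]

theorem bridgeMeasure_nonneg (hM : ∀ i j, 0 ≤ M i j) (hν0 : ∀ i, 0 ≤ ν0 i)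
    (hφ : ∀ t i, 0 < φ t i) (x : Fin (N + 1) → Fin n) : 0 ≤ bridgeMeasure n N ν0 M φ x := by
  rw [bridgeMeasure_eq_tiltedPathMeasure fun t i => (hφ t i).ne']
  exact mul_nonneg (mul_nonneg (div_nonneg (hν0 _) (hφ _ _).le)
    (prod_nonneg fun t _ => hM _ _)) (hφ _ _).le

variable {μ0 : Fin n → ℝ} {x : Fin (N + 1) → Fin n}

theorem bridgeMeasure_ne_zero (hφ : ∀ t i, φ t i ≠ 0) (hν0 : ν0 (x 0) ≠ 0)
    (hm : pathMeasure n N μ0 M x ≠ 0) : bridgeMeasure n N ν0 M φ x ≠ 0 := by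
  simp only [bridgeMeasure_eq_tiltedPathMeasure hφ, pathMeasure_eq_tiltedPathMeasure,
    tiltedPathMeasure, ne_eq, mul_eq_zero, not_or] at hm ⊢
  exact ⟨⟨div_ne_zero hν0 (hφ _ _), hm.1.2⟩, hφ _ _⟩

theorem pathMeasure_ne_zero (hμ0 : ∀ i, μ0 i ≠ 0) (hφ : ∀ t i, φ t i ≠ 0)
    (hP : bridgeMeasure n N ν0 M φ x ≠ 0) : pathMeasure n N μ0 M x ≠ 0 := by
  simp only [bridgeMeasure_eq_tiltedPathMeasure hφ, pathMeasure_eq_tiltedPathMeasure,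
    tiltedPathMeasure, ne_eq, mul_eq_zero, not_or] at hP ⊢
  exact ⟨⟨hμ0 _, hP.1.2⟩, one_ne_zero⟩

theorem sum_mul_log_bridgeMeasure_div_pathMeasure {νN : Fin n → ℝ} (hφ : ∀ t i, φ t i ≠ 0)
    {R : (Fin (N + 1) → Fin n) → ℝ} (hR₀ : ∀ i, (∑ x, if x 0 = i then R x else 0) = ν0 i)
    (hR₁ : ∀ j, (∑ x, if x (Fin.last N) = j then R x else 0) = νN j)
    (hsupp : ∀ x, R x ≠ 0 → bridgeMeasure n N ν0 M φ x ≠ 0 ∧ pathMeasure n N μ0 M x ≠ 0) :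
    ∑ x, R x * log (bridgeMeasure n N ν0 M φ x / pathMeasure n N μ0 M x) =
      ∑ i, ν0 i * log (ν0 i / φ 0 i / μ0 i) + ∑ j, νN j * log (φ (Fin.last N) j / 1) := by
  rw [bridgeMeasure_eq_tiltedPathMeasure hφ, pathMeasure_eq_tiltedPathMeasure] at hsupp ⊢
  exact sum_mul_log_tiltedPathMeasure_div hR₀ hR₁ hsupp

end Bridge

theorem schroedinger_bridge_pythagorean_identity_general
    (n N : ℕ)
    (M : Matrix (Fin n) (Fin n) ℝ) (hM : ∀ i j, 0 ≤ M i j)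
    (μ0 : Fin n → ℝ) (hμ0 : ∀ i, 0 < μ0 i)
    (ν0 νN : Fin n → ℝ)
    (hν00 : ∀ i, 0 ≤ ν0 i)
    (φ φh : Fin (N + 1) → Fin n → ℝ)
    (hφpos : ∀ t x, 0 < φ t x)
    (hrec : ∀ t : Fin N, ∀ i, φ t.castSucc i = ∑ j, M i j * φ t.succ j)
    (hrech : ∀ t : Fin N, ∀ j, φh t.succ j = ∑ i, M i j * φh t.castSucc i)
    (hbc0 : ∀ x, φ 0 x * φh 0 x = ν0 x)
    (hbcN : ∀ x, φ (Fin.last N) x * φh (Fin.last N) x = νN x)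
    (Q : (Fin (N + 1) → Fin n) → ℝ)
    (hQ0 : ∀ x, 0 ≤ Q x)
    (hQm0 : ∀ i, (∑ x, if x 0 = i then Q x else 0) = ν0 i)
    (hQmN : ∀ j, (∑ x, if x (Fin.last N) = j then Q x else 0) = νN j)
    (hQsupp : ∀ x, Q x ≠ 0 → pathMeasure n N μ0 M x ≠ 0) :
    relEnt Q (pathMeasure n N μ0 M) =
        relEnt Q (bridgeMeasure n N ν0 M φ) +
          relEnt (bridgeMeasure n N ν0 M φ) (pathMeasure n N μ0 M) ∧
      relEnt (bridgeMeasure n N ν0 M φ) (pathMeasure n N μ0 M) ≤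
        relEnt Q (pathMeasure n N μ0 M) ∧
      (relEnt Q (pathMeasure n N μ0 M) =
          relEnt (bridgeMeasure n N ν0 M φ) (pathMeasure n N μ0 M) →
        Q = bridgeMeasure n N ν0 M φ) := by
  set P := bridgeMeasure n N ν0 M φ
  set m := pathMeasure n N μ0 M
  have hφ : ∀ t i, φ t i ≠ 0 := fun t i => (hφpos t i).ne'
  have hP₀ := bridgeMeasure_marginal_zero (ν0 := ν0) hφ hrec
  have hP : ∀ x, 0 ≤ P x := bridgeMeasure_nonneg hM hν00 hφpos
  have hQP : ∀ x, Q x ≠ 0 → P x ≠ 0 := fun x hx =>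
    bridgeMeasure_ne_zero hφ (marginal_ne_zero hQ0 hQm0 hx) (hQsupp x hx)
  have hmass : ∑ x, Q x = ∑ x, P x := by
    simpa using (sum_mul_comp_eq_of_marginal hQm0 1).trans
      (sum_mul_comp_eq_of_marginal hP₀ 1).symm
  have hcross : ∑ x, Q x * log (P x / m x) = relEnt P m :=
    (sum_mul_log_bridgeMeasure_div_pathMeasure hφ hQm0 hQmN fun x hx =>
      ⟨hQP x hx, hQsupp x hx⟩).trans
    (sum_mul_log_bridgeMeasure_div_pathMeasure hφ hP₀
      (bridgeMeasure_marginal_last hφ hrech hbc0 hbcN) fun x hx =>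
        ⟨hx, pathMeasure_ne_zero (fun i => (hμ0 i).ne') hφ hx⟩).symm
  have hpyth : relEnt Q m = relEnt Q P + relEnt P m := by
    rw [relEnt_eq_relEnt_add_sum_mul_log fun x hx => ⟨hQP x hx, hQsupp x hx⟩, hcross]
  have hgap := relEnt_nonneg hQ0 hP hmass hQP
  exact ⟨hpyth, by linarith, fun h => eq_of_relEnt_eq_zero hQ0 hP hmass hQP (by linarith)⟩

/-- Pythagorean identity for the Schrödinger bridge `P*`: for any competitor `Q`
with the same endpoint marginals and support inside that of the prior `𝔐`,
`D(Q‖𝔐) = D(Q‖P*) + D(P*‖𝔐)`; consequently `P*` is the unique minimizer of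
`D(·‖𝔐)` over that set. -/
theorem schroedinger_bridge_pythagorean_identity
    (n N : ℕ) (hn : 1 ≤ n) (hN : 1 ≤ N)
    (M : Matrix (Fin n) (Fin n) ℝ) (hM : ∀ i j, 0 ≤ M i j)
    (hMN : ∀ i j, 0 < (M ^ N) i j)
    (μ0 : Fin n → ℝ) (hμ0 : ∀ i, 0 < μ0 i)
    (ν0 νN : Fin n → ℝ)
    (hν00 : ∀ i, 0 ≤ ν0 i) (hν01 : ∑ i, ν0 i = 1)
    (hνN0 : ∀ j, 0 ≤ νN j) (hνN1 : ∑ j, νN j = 1)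
    (φ φh : Fin (N + 1) → Fin n → ℝ)
    (hφpos : ∀ t x, 0 < φ t x) (hφh0 : ∀ t x, 0 ≤ φh t x)
    (hrec : ∀ t : Fin N, ∀ i, φ t.castSucc i = ∑ j, M i j * φ t.succ j)
    (hrech : ∀ t : Fin N, ∀ j, φh t.succ j = ∑ i, M i j * φh t.castSucc i)
    (hbc0 : ∀ x, φ 0 x * φh 0 x = ν0 x)
    (hbcN : ∀ x, φ (Fin.last N) x * φh (Fin.last N) x = νN x)
    (Q : (Fin (N + 1) → Fin n) → ℝ)
    (hQ0 : ∀ x, 0 ≤ Q x) (hQ1 : ∑ x, Q x = 1)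
    (hQm0 : ∀ i, (∑ x, if x 0 = i then Q x else 0) = ν0 i)
    (hQmN : ∀ j, (∑ x, if x (Fin.last N) = j then Q x else 0) = νN j)
    (hQsupp : ∀ x, Q x ≠ 0 → pathMeasure n N μ0 M x ≠ 0) :
    relEnt Q (pathMeasure n N μ0 M) =
        relEnt Q (bridgeMeasure n N ν0 M φ) +
          relEnt (bridgeMeasure n N ν0 M φ) (pathMeasure n N μ0 M) ∧
      relEnt (bridgeMeasure n N ν0 M φ) (pathMeasure n N μ0 M) ≤
        relEnt Q (pathMeasure n N μ0 M) ∧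
      (relEnt Q (pathMeasure n N μ0 M) =
          relEnt (bridgeMeasure n N ν0 M φ) (pathMeasure n N μ0 M) →
        Q = bridgeMeasure n N ν0 M φ) :=
  schroedinger_bridge_pythagorean_identity_general n N M hM μ0 hμ0 ν0 νN hν00 φ φh hφpos hrec hrech
    hbc0 hbcN Q hQ0 hQm0 hQmN hQsupp
end

section
/- Let A be the adjacency matrix of a strongly connected aperiodic graph with (Aᴺ)_{1n} > 0, and let P* be the path measure on {1,…,n}^{N+1} obtained from the Schrödinger bridge with prior transition A and marginals δ₁ at time 0 and δ_n at time N (i.e., P*(x) = δ₁(x₀) (φ_v(N,x_N)/φ_v(0,x₀)) ∏_{t=0}^{N−1} a_{x_t x_{t+1}} for a positive solution φ_v of φ_v(t) = Aφ_v(t+1)). Then P* assigns probability exactly 1/(Aᴺ)_{1n} to each admissible path of length N from node 1 to node n, and probability 0 to all other paths. -/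
/-!
Write `w(x) = ∏ₜ a_{xₜ xₜ₊₁}` for the weight of a path `x`. Since summing `w` over the paths
from `i` to `j` gives `(Aᴺ)ᵢⱼ`, the time-`N` marginal of `P*` at `j` is
`(φ(N, j) / φ(0, 1)) · (Aᴺ)_{1j}`. Matching it with `δₙ` forces `φ(N, n) / φ(0, 1) = 1 / (Aᴺ)_{1n}`,
which is the mass of every admissible path from `1` to `n`, and `(Aᴺ)_{1j} = 0` for `j ≠ n`, so every
path from `1` to such a `j` has weight `0`; a path from `1` to `n` that is not admissible uses an
edge with `a = 0`.
-/

open Matrix Finset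

namespace Matrix

variable {ι R : Type*}

def pathWeight [CommMonoid R] (A : Matrix ι ι R) {N : ℕ} (x : Fin (N + 1) → ι) : R :=
  ∏ t : Fin N, A (x t.castSucc) (x t.succ)

lemma pathWeight_cons [CommMonoid R] (A : Matrix ι ι R) {N : ℕ} (k : ι) (y : Fin (N + 1) → ι) :
    A.pathWeight (Fin.cons k y : Fin (N + 2) → ι) = A k (y 0) * A.pathWeight y := by
  simp only [pathWeight, Fin.prod_univ_succ, Fin.castSucc_zero, Fin.cons_zero, Fin.cons_succ,
    ← Fin.succ_castSucc]

theorem pathWeight_eq_zero_of_not_forall_eq_one [CommMonoidWithZero R] {A : Matrix ι ι R}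
    (hA : ∀ i j, A i j = 0 ∨ A i j = 1) {N : ℕ} {x : Fin (N + 1) → ι}
    (h : ¬ ∀ t : Fin N, A (x t.castSucc) (x t.succ) = 1) : A.pathWeight x = 0 := by
  obtain ⟨t, ht⟩ := not_forall.1 h
  exact Finset.prod_eq_zero (Finset.mem_univ t) ((hA _ _).resolve_right ht)

variable [Fintype ι] [DecidableEq ι]

theorem sum_pathWeight_eq_pow_apply [CommSemiring R] (A : Matrix ι ι R) (N : ℕ) (i j : ι) :
    ∑ x : Fin (N + 1) → ι, (if x 0 = i ∧ x (Fin.last N) = j then A.pathWeight x else 0) =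
      (A ^ N) i j := by
  induction N generalizing i with
  | zero =>
    rw [← (Equiv.funUnique (Fin 1) ι).symm.sum_comp]
    simp [pathWeight, Matrix.one_apply, ite_and]
  | succ N ih =>
    calc ∑ x : Fin (N + 2) → ι, (if x 0 = i ∧ x (Fin.last (N + 1)) = j then A.pathWeight x else 0)
        = ∑ y : Fin (N + 1) → ι, ∑ k : ι,
            if k = i ∧ y (Fin.last N) = j then A k (y 0) * A.pathWeight y else 0 := by
          rw [← (Fin.consEquiv fun _ => ι).sum_comp, Fintype.sum_prod_type, Finset.sum_comm]
          simp only [Fin.consEquiv, Equiv.coe_fn_mk, Fin.cons_zero, ← Fin.succ_last, Fin.cons_succ,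
            pathWeight_cons]
      _ = ∑ y : Fin (N + 1) → ι, if y (Fin.last N) = j then A i (y 0) * A.pathWeight y else 0 := by
          simp only [ite_and, Finset.sum_ite_eq', Finset.mem_univ, if_true]
      _ = ∑ m : ι, A i m * ∑ y : Fin (N + 1) → ι,
            if y 0 = m ∧ y (Fin.last N) = j then A.pathWeight y else 0 := by
          simp only [Finset.mul_sum, mul_ite, mul_zero]
          rw [Finset.sum_comm]
          simp only [ite_and, Finset.sum_ite_eq, Finset.mem_univ, if_true]
      _ = (A ^ (N + 1)) i j := by
          simp only [ih, pow_succ', Matrix.mul_apply]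

theorem sum_ite_last_mul_pathWeight [CommSemiring R] (A : Matrix ι ι R) (g : ι → ι → R)
    (N : ℕ) (i j : ι) :
    ∑ x : Fin (N + 1) → ι, (if x (Fin.last N) = j then
        (if x 0 = i then 1 else 0) * g (x 0) (x (Fin.last N)) * A.pathWeight x else 0) =
      g i j * (A ^ N) i j := by
  rw [← sum_pathWeight_eq_pow_apply, Finset.mul_sum]
  refine Finset.sum_congr rfl fun x _ => ?_
  by_cases hj : x (Fin.last N) = j <;> by_cases hi : x 0 = i <;> simp [hi, hj]

theorem pathWeight_eq_zero_of_pow_apply_eq_zero [CommSemiring R] [PartialOrder R]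
    [IsOrderedRing R] {A : Matrix ι ι R} (hA : ∀ i j, 0 ≤ A i j) {N : ℕ} (x : Fin (N + 1) → ι)
    (h : (A ^ N) (x 0) (x (Fin.last N)) = 0) : A.pathWeight x = 0 := by
  rw [← sum_pathWeight_eq_pow_apply, Finset.sum_eq_zero_iff_of_nonneg] at h
  · simpa using h x (Finset.mem_univ x)
  · intro y _
    split_ifs
    exacts [Finset.prod_nonneg fun t _ => hA _ _, le_rfl]

end Matrix

theorem bridge_uniform_on_feasible_paths_general
    (n N : ℕ)
    (A : Matrix (Fin (n + 1)) (Fin (n + 1)) ℝ)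
    (h01 : ∀ i j, A i j = 0 ∨ A i j = 1)
    (φv : Fin (N + 1) → Fin (n + 1) → ℝ) (hφpos : ∀ t x, 0 < φv t x)
    (hmargN : ∀ j : Fin (n + 1),
      (∑ x : Fin (N + 1) → Fin (n + 1),
        if x (Fin.last N) = j then
          (if x 0 = 0 then (1 : ℝ) else 0) *
            (φv (Fin.last N) (x (Fin.last N)) / φv 0 (x 0)) *
            ∏ t : Fin N, A (x t.castSucc) (x t.succ)
        else 0) = if j = Fin.last n then 1 else 0) :
    ∀ x : Fin (N + 1) → Fin (n + 1),
      ((x 0 = 0 ∧ x (Fin.last N) = Fin.last n ∧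
          ∀ t : Fin N, A (x t.castSucc) (x t.succ) = 1) →
        (if x 0 = 0 then (1 : ℝ) else 0) *
            (φv (Fin.last N) (x (Fin.last N)) / φv 0 (x 0)) *
            ∏ t : Fin N, A (x t.castSucc) (x t.succ) =
          1 / (A ^ N) 0 (Fin.last n)) ∧
      (¬ (x 0 = 0 ∧ x (Fin.last N) = Fin.last n ∧
          ∀ t : Fin N, A (x t.castSucc) (x t.succ) = 1) →
        (if x 0 = 0 then (1 : ℝ) else 0) *
            (φv (Fin.last N) (x (Fin.last N)) / φv 0 (x 0)) *
            ∏ t : Fin N, A (x t.castSucc) (x t.succ) = 0) := by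
  have hmarg (j : Fin (n + 1)) :
      φv (Fin.last N) j / φv 0 0 * (A ^ N) 0 j = if j = Fin.last n then 1 else 0 :=
    (A.sum_ite_last_mul_pathWeight (fun a b => φv (Fin.last N) b / φv 0 a) N 0 j).symm.trans
      (hmargN j)
  intro x
  constructor
  · rintro ⟨h0, hlast, hedges⟩
    have hmass := hmarg (Fin.last n)
    rw [if_pos rfl] at hmass
    rw [h0, hlast, if_pos rfl, Finset.prod_eq_one fun t _ => hedges t, one_mul, mul_one]
    exact eq_one_div_of_mul_eq_one_left hmass
  · intro hbad
    by_cases h0 : x 0 = 0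
    · refine mul_eq_zero_of_right _ ?_
      by_cases hlast : x (Fin.last N) = Fin.last n
      · exact pathWeight_eq_zero_of_not_forall_eq_one h01 fun h => hbad ⟨h0, hlast, h⟩
      · have hratio : φv (Fin.last N) (x (Fin.last N)) / φv 0 0 ≠ 0 :=
          (div_pos (hφpos _ _) (hφpos _ _)).ne'
        have hcount : (A ^ N) (x 0) (x (Fin.last N)) = 0 := by
          simpa [h0, hlast, hratio] using hmarg (x (Fin.last N))
        exact pathWeight_eq_zero_of_pow_apply_eq_zero
          (fun i j => by rcases h01 i j with h | h <;> simp [h]) x hcount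
    · rw [if_neg h0, zero_mul, zero_mul]

/-- The Schrödinger bridge with prior transition the adjacency matrix and point-mass
marginals at the source (node `0`) and the sink (node `last`) assigns probability
`1/(Aᴺ)_{1n}` to every admissible path of length `N` from source to sink, and
probability `0` to every other path. -/
theorem bridge_uniform_on_feasible_paths
    (n N : ℕ) (hN : 1 ≤ N)
    (A : Matrix (Fin (n + 1)) (Fin (n + 1)) ℝ)
    (h01 : ∀ i j, A i j = 0 ∨ A i j = 1)
    (hcount : 0 < (A ^ N) 0 (Fin.last n))
    (φv : Fin (N + 1) → Fin (n + 1) → ℝ) (hφpos : ∀ t x, 0 < φv t x)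
    (hrec : ∀ t : Fin N, ∀ i, φv t.castSucc i = ∑ j, A i j * φv t.succ j)
    (hmargN : ∀ j : Fin (n + 1),
      (∑ x : Fin (N + 1) → Fin (n + 1),
        if x (Fin.last N) = j then
          (if x 0 = 0 then (1 : ℝ) else 0) *
            (φv (Fin.last N) (x (Fin.last N)) / φv 0 (x 0)) *
            ∏ t : Fin N, A (x t.castSucc) (x t.succ)
        else 0) = if j = Fin.last n then 1 else 0) :
    ∀ x : Fin (N + 1) → Fin (n + 1),
      ((x 0 = 0 ∧ x (Fin.last N) = Fin.last n ∧
          ∀ t : Fin N, A (x t.castSucc) (x t.succ) = 1) →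
        (if x 0 = 0 then (1 : ℝ) else 0) *
            (φv (Fin.last N) (x (Fin.last N)) / φv 0 (x 0)) *
            ∏ t : Fin N, A (x t.castSucc) (x t.succ) =
          1 / (A ^ N) 0 (Fin.last n)) ∧
      (¬ (x 0 = 0 ∧ x (Fin.last N) = Fin.last n ∧
          ∀ t : Fin N, A (x t.castSucc) (x t.succ) = 1) →
        (if x 0 = 0 then (1 : ℝ) else 0) *
            (φv (Fin.last N) (x (Fin.last N)) / φv 0 (x 0)) *
            ∏ t : Fin N, A (x t.castSucc) (x t.succ) = 0) :=
  bridge_uniform_on_feasible_paths_general n N A h01 φv hφpos hmargN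
end

section
/- Let M be an n×n matrix with all positive entries and let D₁, D₂ be diagonal matrices with positive diagonals such that M = D₁ M D₂⁻¹. Then D₂ is a scalar matrix, D₂ = λI for some λ > 0, and D₁ = λI as well. -/
open Matrix

theorem Matrix.apply_eq_of_mul_diagonal_eq_diagonal_mul {ι R : Type*} [Fintype ι] [DecidableEq ι]
    [CommRing R] [NoZeroDivisors R] {M : Matrix ι ι R} (hM : ∀ i j, M i j ≠ 0) {d e : ι → R}
    (h : M * diagonal e = diagonal d * M) (i j : ι) : d i = e j := by
  have hij := congrFun (congrFun h i) j
  rw [mul_diagonal, diagonal_mul, mul_comm (d i)] at hij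
  exact (mul_left_cancel₀ (hM i j) hij).symm

theorem diagonal_conjugation_of_positive_matrix_is_scalar_general
    (n : ℕ)
    (M : Matrix (Fin n) (Fin n) ℝ) (hM : ∀ i j, 0 < M i j)
    (d e : Fin n → ℝ) (he : ∀ i, 0 < e i)
    (h : M = Matrix.diagonal d * M * (Matrix.diagonal e)⁻¹) :
    ∃ lam : ℝ, 0 < lam ∧
      Matrix.diagonal e = lam • (1 : Matrix (Fin n) (Fin n) ℝ) ∧
      Matrix.diagonal d = lam • (1 : Matrix (Fin n) (Fin n) ℝ) := by
  rcases isEmpty_or_nonempty (Fin n) with _ | ⟨⟨i₀⟩⟩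
  · exact ⟨1, one_pos, Subsingleton.elim _ _, Subsingleton.elim _ _⟩
  have hdet : IsUnit (diagonal e).det := by
    rw [det_diagonal]
    exact (Finset.prod_pos fun i _ => he i).ne'.isUnit
  have hcomm : M * diagonal e = diagonal d * M := by
    conv_lhs => rw [h]
    exact nonsing_inv_mul_cancel_right _ _ hdet
  have hde := apply_eq_of_mul_diagonal_eq_diagonal_mul (fun i j => (hM i j).ne') hcomm
  refine ⟨e i₀, he i₀, ?_, ?_⟩ <;> rw [smul_one_eq_diagonal] <;> congr 1 <;> funext i
  · rw [← hde i₀ i, hde i₀ i₀]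
  · exact hde i i₀

/-- If a positive matrix `M` satisfies `M = D₁ M D₂⁻¹` for diagonal matrices with
positive diagonals, then `D₂ = λI` and `D₁ = λI` for some `λ > 0`. -/
theorem diagonal_conjugation_of_positive_matrix_is_scalar
    (n : ℕ) (hn : 2 ≤ n)
    (M : Matrix (Fin n) (Fin n) ℝ) (hM : ∀ i j, 0 < M i j)
    (d e : Fin n → ℝ) (hd : ∀ i, 0 < d i) (he : ∀ i, 0 < e i)
    (h : M = Matrix.diagonal d * M * (Matrix.diagonal e)⁻¹) :
    ∃ lam : ℝ, 0 < lam ∧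
      Matrix.diagonal e = lam • (1 : Matrix (Fin n) (Fin n) ℝ) ∧
      Matrix.diagonal d = lam • (1 : Matrix (Fin n) (Fin n) ℝ) :=
  diagonal_conjugation_of_positive_matrix_is_scalar_general n M hM d e he h
end
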